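/- arXiv:1701.07636 — 7 statements merged into one kernel-verified Lean document; each statement's English description precedes it below -/
import Mathlib

section
/- Let F be a field, n ≥ 2, 1 ≤ k ≤ n−1, let G be a generator matrix of an [n,k] MDS code over F and H a corresponding parity-check matrix. Then for every subset S of the n coordinates, the rank of the matrix G · diag(1_S) · Hᵀ equals min{k, n−k, |S|, n−|S|}. (This is the number of symbols retrieved by the (rep, e)-retrieval scheme with e = 1_S, so the scheme has rate min{k, n−k, w(e), n−w(e)}/n.) -/
/-!
Write `g = G.mulVecLin : Fⁿ → Fᵏ` and `p` for the coordinate projection onto `F^S`. Since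
`G Hᵀ = 0` and the ranks add up to `n`, `ker g` is the column space of `Hᵀ`, so the rank in
question is `dim g(p(ker g))`. As `p` is idempotent, rank–nullity applied to `p` and then to
`g` gives `dim g(p(ker g)) = dim ker g − dim (ker g ∩ F^{Sᶜ}) − dim (ker g ∩ F^S)`. The MDS
property says that the columns of `G` indexed by `T` span a space of dimension
`min(k, |T|)`, hence `dim (ker g ∩ F^T) = |T| − min(k, |T|)`. Altogether the rank is
`min(k, |S|) + min(k, n − |S|) − k = min{k, n − k, |S|, n − |S|}`.
-/

open Module LinearMap
open scoped Matrix

section RankNullity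

variable {K V W : Type*} [DivisionRing K] [AddCommGroup V] [Module K V]
  [AddCommGroup W] [Module K W] [FiniteDimensional K V]

theorem Submodule.finrank_map_add_finrank_inf_ker (f : V →ₗ[K] W) (p : Submodule K V) :
    finrank K (p.map f) + finrank K ↥(p ⊓ ker f) = finrank K p := by
  have h := finrank_range_add_finrank_ker (f.domRestrict p)
  rwa [range_domRestrict, ker_domRestrict, ← Submodule.finrank_map_subtype_eq,
    Submodule.map_comap_subtype] at h

theorem IsIdempotentElem.finrank_map_map_ker_add {p : V →ₗ[K] V} (hp : IsIdempotentElem p)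
    (g : V →ₗ[K] W) :
    finrank K (((ker g).map p).map g) + finrank K ↥(ker g ⊓ ker p)
      + finrank K ↥(ker g ⊓ range p) = finrank K (ker g) := by
  have hp_ker := (ker g).finrank_map_add_finrank_inf_ker p
  have hg_img := ((ker g).map p).finrank_map_add_finrank_inf_ker g
  have hinf : (ker g).map p ⊓ ker g = ker g ⊓ range p :=
    le_antisymm (fun x ⟨⟨y, _, hyx⟩, hx⟩ => ⟨hx, y, hyx⟩)
      fun x ⟨hx, hxp⟩ => ⟨⟨x, hx, hp.mem_range_iff.mp hxp⟩, hx⟩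
  rw [hinf] at hg_img
  omega

end RankNullity

namespace Matrix

theorem ker_mulVecLin_eq_range_mulVecLin_transpose {F ι m m' : Type*} [Field F] [Fintype ι]
    [Fintype m] [Fintype m'] {G : Matrix m ι F} {H : Matrix m' ι F} (hGH : G * Hᵀ = 0)
    (hrank : G.rank + H.rank = Fintype.card ι) :
    ker G.mulVecLin = range Hᵀ.mulVecLin := by
  refine (Submodule.eq_of_le_of_finrank_eq ?_ ?_).symm
  · rw [range_le_ker_iff, ← mulVecLin_mul, hGH, mulVecLin_zero]
  · have hG := finrank_range_add_finrank_ker G.mulVecLin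
    rw [finrank_fintype_fun_eq_card] at hG
    have hH : finrank F (range Hᵀ.mulVecLin) = H.rank := rank_transpose H
    change G.rank + _ = _ at hG
    omega

section CoordProj

variable {ι R : Type*} [Fintype ι] [DecidableEq ι] [CommSemiring R]

/-- `R` is explicit: when it is left to unification, `G * coordProj T` picks up the
`CStarMatrix` multiplication instance. -/
def coordProj (R : Type*) [Zero R] [One R] (T : Finset ι) : Matrix ι ι R :=
  diagonal fun i => if i ∈ T then 1 else 0

theorem coordProj_univ : coordProj R (Finset.univ : Finset ι) = 1 := by
  simp [coordProj]

theorem coordProj_mulVec_apply (T : Finset ι) (x : ι → R) (i : ι) :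
    (coordProj R T *ᵥ x) i = if i ∈ T then x i else 0 := by
  simp [coordProj, mulVec_diagonal]

theorem col_mul_coordProj {m : Type*} (G : Matrix m ι R) (T : Finset ι) (i : ι) :
    (G * coordProj R T).col i = if i ∈ T then G.col i else 0 := by
  funext j
  by_cases hi : i ∈ T <;> simp [coordProj, mul_diagonal, hi]

theorem mem_range_coordProj_iff {T : Finset ι} {x : ι → R} :
    x ∈ range (coordProj R T).mulVecLin ↔ ∀ i ∉ T, x i = 0 := by
  refine ⟨fun ⟨y, hy⟩ i hi => by simp [← hy, coordProj_mulVec_apply, hi],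
    fun hx => ⟨x, ?_⟩⟩
  ext i
  by_cases hi : i ∈ T <;> simp [coordProj_mulVec_apply, hi, hx]

theorem isIdempotentElem_coordProj (T : Finset ι) :
    IsIdempotentElem (coordProj R T).mulVecLin := by
  refine LinearMap.ext fun x => funext fun i => ?_
  by_cases hi : i ∈ T <;> simp [coordProj_mulVec_apply, hi]

theorem ker_coordProj (T : Finset ι) :
    ker (coordProj R T).mulVecLin = range (coordProj R Tᶜ).mulVecLin := by
  ext x
  rw [mem_range_coordProj_iff, mem_ker, funext_iff]
  refine forall_congr' fun i => ?_
  by_cases hi : i ∈ T <;> simp [coordProj_mulVec_apply, hi]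

theorem finrank_range_coordProj {F : Type*} [Field F] (T : Finset ι) :
    finrank F (range (coordProj F T).mulVecLin) = T.card := by
  classical
  change (coordProj F T).rank = _
  rw [coordProj, rank_diagonal, ← Fintype.card_coe]
  exact Fintype.card_congr (Equiv.subtypeEquivRight fun i => by by_cases hi : i ∈ T <;> simp [hi])

end CoordProj

section MDS

variable {ι F : Type*} [Fintype ι] [Field F] {k : ℕ}

def IsMDS (G : Matrix (Fin k) ι F) : Prop :=
  ∀ s : Finset ι, s.card = k → LinearIndependent F (fun j : s => Gᵀ j.val)

variable {G : Matrix (Fin k) ι F}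

theorem IsMDS.finrank_span_of_card_le (hG : G.IsMDS) (hk : k ≤ Fintype.card ι) {T : Finset ι}
    (hT : T.card ≤ k) : finrank F (Submodule.span F (G.col '' T)) = T.card := by
  obtain ⟨s, hTs, hs⟩ := Finset.exists_superset_card_eq hT (by simpa using hk)
  have hli : LinearIndependent F (fun j : (T : Set ι) => G.col j) :=
    (hG s hs).comp _ (Set.inclusion_injective (Finset.coe_subset.mpr hTs))
  rw [Set.image_eq_range, finrank_span_eq_card hli]
  simp

theorem IsMDS.finrank_span (hG : G.IsMDS) (hk : k ≤ Fintype.card ι) (T : Finset ι) :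
    finrank F (Submodule.span F (G.col '' T)) = min k T.card := by
  rcases le_total T.card k with hT | hT
  · rw [min_eq_right hT, hG.finrank_span_of_card_le hk hT]
  obtain ⟨s, hsT, hs⟩ := Finset.exists_subset_card_eq hT
  refine (min_eq_left hT).symm ▸ le_antisymm ?_ ?_
  · simpa using Submodule.finrank_le (Submodule.span F (G.col '' T))
  · calc k = finrank F (Submodule.span F (G.col '' s)) := by
          rw [hG.finrank_span_of_card_le hk hs.le, hs]
      _ ≤ _ := Submodule.finrank_mono (Submodule.span_mono (Set.image_mono (by simpa using hsT)))

variable [DecidableEq ι]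

theorem IsMDS.rank_mul_coordProj (hG : G.IsMDS) (hk : k ≤ Fintype.card ι) (T : Finset ι) :
    (G * coordProj F T).rank = min k T.card := by
  have hcols : Set.range (G * coordProj F T).col ⊆ insert 0 (G.col '' T) := by
    rintro _ ⟨i, rfl⟩
    rw [col_mul_coordProj]
    split_ifs with hi
    · exact Set.mem_insert_of_mem _ ⟨i, hi, rfl⟩
    · exact Set.mem_insert _ _
  have himage : G.col '' T ⊆ Set.range (G * coordProj F T).col := by
    rintro _ ⟨i, hi, rfl⟩
    exact ⟨i, by rw [col_mul_coordProj, if_pos (Finset.mem_coe.mp hi)]⟩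
  have hspan : Submodule.span F (Set.range (G * coordProj F T).col)
      = Submodule.span F (G.col '' T) :=
    le_antisymm ((Submodule.span_mono hcols).trans Submodule.span_insert_zero.le)
      (Submodule.span_mono himage)
  rw [rank_eq_finrank_span_cols, hspan, hG.finrank_span hk T]

theorem IsMDS.rank_eq (hG : G.IsMDS) (hk : k ≤ Fintype.card ι) : G.rank = k := by
  simpa [coordProj_univ, min_eq_left hk] using hG.rank_mul_coordProj hk Finset.univ

theorem IsMDS.finrank_ker_inf_range_coordProj (hG : G.IsMDS) (hk : k ≤ Fintype.card ι)
    (T : Finset ι) :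
    finrank F ↥(ker G.mulVecLin ⊓ range (coordProj F T).mulVecLin) + min k T.card = T.card := by
  have h := (range (coordProj F T).mulVecLin).finrank_map_add_finrank_inf_ker G.mulVecLin
  rw [← range_comp, ← mulVecLin_mul, ← rank, hG.rank_mul_coordProj hk,
    finrank_range_coordProj, inf_comm (range _)] at h
  omega

end MDS

end Matrix

theorem stmt_0_general (F : Type*) [Field F] (n k : ℕ) (hk2 : k ≤ n - 1)
    (G : Matrix (Fin k) (Fin n) F) (H : Matrix (Fin (n - k)) (Fin n) F)
    (hMDS : ∀ s : Finset (Fin n), s.card = k →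
      LinearIndependent F (fun j : s => G.transpose j.val))
    (hH : H.rank = n - k) (hGH : G * H.transpose = 0)
    (S : Finset (Fin n)) :
    (G * Matrix.diagonal (fun i => if i ∈ S then (1 : F) else 0) * H.transpose).rank
      = min (min k (n - k)) (min S.card (n - S.card)) := by
  have hk : k ≤ Fintype.card (Fin n) := by rw [Fintype.card_fin]; omega
  have hG : G.IsMDS := hMDS
  have hker : ker G.mulVecLin = range Hᵀ.mulVecLin :=
    Matrix.ker_mulVecLin_eq_range_mulVecLin_transpose hGH
      (by rw [hG.rank_eq hk, hH, Fintype.card_fin]; omega)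
  have hrank : (G * Matrix.coordProj F S * Hᵀ).rank = finrank F
      (((ker G.mulVecLin).map (Matrix.coordProj F S).mulVecLin).map G.mulVecLin) := by
    rw [Matrix.rank, Matrix.mulVecLin_mul, Matrix.mulVecLin_mul, range_comp, Submodule.map_comp,
      hker]
  have hdim : finrank F (ker G.mulVecLin) = n - k := by
    rw [hker]
    exact (Matrix.rank_transpose H).trans hH
  have hsplit := (Matrix.isIdempotentElem_coordProj S).finrank_map_map_ker_add G.mulVecLin
  rw [Matrix.ker_coordProj] at hsplit
  have hS := hG.finrank_ker_inf_range_coordProj hk S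
  have hSc := hG.finrank_ker_inf_range_coordProj hk Sᶜ
  rw [Finset.card_compl, Fintype.card_fin] at hSc
  have hSn : S.card ≤ n := by simpa using S.card_le_univ
  change (G * Matrix.coordProj F S * Hᵀ).rank = _
  omega

/-- For an `[n,k]` MDS code with generator matrix `G` and parity-check
matrix `H`, the rank of `G · diag(1_S) · Hᵀ` equals `min {k, n−k, |S|, n−|S|}`. -/
theorem stmt_0 (F : Type*) [Field F] (n k : ℕ) (hn : 2 ≤ n) (hk1 : 1 ≤ k) (hk2 : k ≤ n - 1)
    (G : Matrix (Fin k) (Fin n) F) (H : Matrix (Fin (n - k)) (Fin n) F)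
    (hMDS : ∀ s : Finset (Fin n), s.card = k →
      LinearIndependent F (fun j : s => G.transpose j.val))
    (hH : H.rank = n - k) (hGH : G * H.transpose = 0)
    (S : Finset (Fin n)) :
    (G * Matrix.diagonal (fun i => if i ∈ S then (1 : F) else 0) * H.transpose).rank
      = min (min k (n - k)) (min S.card (n - S.card)) :=
  stmt_0_general F n k hk2 G H hMDS hH hGH S
end

section
/- Let F be a field, 1 ≤ k ≤ n−1, let G be a generator matrix of an [n,k] MDS code over F and H a corresponding parity-check matrix. If S is a subset of the n coordinates satisfying n − |S| ≤ k ≤ |S|, then the rank of G · diag(1_S) · Hᵀ equals n − |S|. -/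
open Matrix Module

/-- For an `[n,k]` MDS code with generator matrix `G` and parity-check
matrix `H`, if `n − |S| ≤ k ≤ |S|` then the rank of `G · diag(1_S) · Hᵀ` is `n − |S|`. -/
theorem stmt_1 (F : Type*) [Field F] (n k : ℕ) (hk1 : 1 ≤ k) (hk2 : k ≤ n - 1)
    (G : Matrix (Fin k) (Fin n) F) (H : Matrix (Fin (n - k)) (Fin n) F)
    (hMDS : ∀ s : Finset (Fin n), s.card = k →
      LinearIndependent F (fun j : s => G.transpose j.val))
    (hH : H.rank = n - k) (hGH : G * H.transpose = 0)
    (S : Finset (Fin n)) (hS1 : n - S.card ≤ k) (hS2 : k ≤ S.card) :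
    (G * Matrix.diagonal (fun i => if i ∈ S then (1 : F) else 0) * H.transpose).rank
      = n - S.card := by
  classical
  have hkn : k ≤ n := le_trans hk2 (Nat.sub_le n 1)
  have hSn : S.card ≤ n := le_trans (Finset.card_le_univ S) (by simp)
  -- Key: a codeword vanishing on ≥ k coordinates is zero.
  have key : ∀ (x : Fin k → F) (T : Finset (Fin n)), k ≤ T.card →
      (∀ j ∈ T, Matrix.vecMul x G j = 0) → x = 0 := by
    intro x T hT hxT
    obtain ⟨T', hT'sub, hT'card⟩ := Finset.exists_subset_card_eq hT
    have hli := hMDS T' hT'card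
    have hne : T'.Nonempty := Finset.card_pos.1 (by omega)
    haveI : Nonempty ↥T' := ⟨⟨hne.choose, hne.choose_spec⟩⟩
    have hspan : Submodule.span F (Set.range (fun j : T' => G.transpose j.val)) = ⊤ :=
      hli.span_eq_top_of_card_eq_finrank (by
        rw [Fintype.card_coe, hT'card, Module.finrank_fintype_fun_eq_card, Fintype.card_fin])
    let f : (Fin k → F) →ₗ[F] F :=
      { toFun := fun v => dotProduct x v
        map_add' := fun a b => dotProduct_add x a b
        map_smul' := fun c a => by simp }
    have hker : (⊤ : Submodule F (Fin k → F)) ≤ LinearMap.ker f := by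
      rw [← hspan]
      apply Submodule.span_le.2
      rintro v ⟨j, rfl⟩
      have := hxT j.val (hT'sub j.2)
      simpa [f, LinearMap.mem_ker, Matrix.vecMul, dotProduct] using this
    funext i
    have := hker (Submodule.mem_top : Pi.single i (1:F) ∈ ⊤)
    simpa [f, LinearMap.mem_ker, dotProduct_single] using this
  -- injectivity of x ↦ x ᵥ* G
  have hGinj : Function.Injective G.vecMulLinear := by
    rw [← LinearMap.ker_eq_bot]
    apply (Submodule.eq_bot_iff _).2
    intro x hx
    rw [LinearMap.mem_ker, Matrix.vecMulLinear_apply] at hx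
    exact key x Finset.univ (by simpa using hkn) (fun j _ => by rw [hx]; rfl)
  have hrangeG : finrank F (LinearMap.range G.vecMulLinear) = k := by
    rw [LinearMap.finrank_range_of_inj hGinj, Module.finrank_fintype_fun_eq_card,
      Fintype.card_fin]
  have hkerH : finrank F (LinearMap.ker H.mulVecLin) = k := by
    have h := LinearMap.finrank_range_add_finrank_ker H.mulVecLin
    rw [Module.finrank_fintype_fun_eq_card, Fintype.card_fin] at h
    rw [Matrix.rank] at hH
    omega
  have hle : LinearMap.range G.vecMulLinear ≤ LinearMap.ker H.mulVecLin := by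
    rintro _ ⟨x, rfl⟩
    rw [LinearMap.mem_ker, Matrix.mulVecLin_apply, Matrix.vecMulLinear_apply,
      ← Matrix.mulVec_transpose, Matrix.mulVec_mulVec]
    have h0 : H * Gᵀ = 0 := by
      have := congrArg Matrix.transpose hGH
      simpa [Matrix.transpose_mul] using this
    rw [h0, Matrix.zero_mulVec]
  have hker_eq : LinearMap.range G.vecMulLinear = LinearMap.ker H.mulVecLin :=
    Submodule.eq_of_le_of_finrank_le hle (by rw [hrangeG, hkerH])
  set C : Finset (Fin n) := Sᶜ with hC
  have hCcard : C.card = n - S.card := by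
    rw [hC, Finset.card_compl, Fintype.card_fin]
  -- columns of H indexed by C are linearly independent
  have hHcols : LinearIndependent F (fun j : ↥C => (fun b => H b j.val)) := by
    rw [Fintype.linearIndependent_iff]
    intro g hg
    set μ : Fin n → F := fun j => if h : j ∈ C then g ⟨j, h⟩ else 0 with hμ
    have hμker : μ ∈ LinearMap.ker H.mulVecLin := by
      rw [LinearMap.mem_ker]
      funext b
      have hgb := congrFun hg b
      simp only [Finset.sum_apply, Pi.smul_apply, smul_eq_mul, Pi.zero_apply] at hgb
      have : (H.mulVecLin μ) b = ∑ j : ↥C, g j * H b j.val := by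
        rw [Matrix.mulVecLin_apply]
        show (∑ j, H b j * μ j) = _
        calc ∑ j : Fin n, H b j * μ j
            = ∑ j ∈ C, H b j * μ j :=
              (Finset.sum_subset (Finset.subset_univ C)
                (fun j _ hj => by simp [hμ, hj])).symm
          _ = ∑ j : ↥C, H b j.val * μ j.val :=
              (Finset.sum_attach C (fun j => H b j * μ j)).symm
          _ = ∑ j : ↥C, g j * H b j.val := by
              apply Finset.sum_congr rfl
              intro j _
              simp [hμ, j.2, mul_comm]
      rw [this]
      simpa using hgb
    rw [← hker_eq] at hμker
    obtain ⟨x, hx⟩ := hμker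
    have hx0 : x = 0 := by
      apply key x S hS2
      intro j hj
      have hjC : j ∉ C := by simp [hC, hj]
      have : μ j = 0 := by simp [hμ, hjC]
      rw [← this, ← hx, Matrix.vecMulLinear_apply]
    intro j
    have : μ j.val = 0 := by rw [← hx, hx0]; simp
    simpa [hμ, j.2] using this
  -- columns of G indexed by C are linearly independent
  have hGcols : LinearIndependent F (fun j : ↥C => (fun a => G a j.val)) := by
    have hCk : C.card ≤ k := by omega
    obtain ⟨T, hCT, _, hTcard⟩ :=
      Finset.exists_subsuperset_card_eq (Finset.subset_univ C) hCk (by simpa using hkn)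
    have hli := hMDS T hTcard
    have := hli.comp (fun j : ↥C => (⟨j.val, hCT j.2⟩ : ↥T))
      (fun a b hab => Subtype.ext (congrArg (Subtype.val : ↥T → Fin n) hab))
    exact this
  set A : Matrix (Fin k) ↥C F := G.submatrix id Subtype.val with hA
  set B : Matrix (Fin (n - k)) ↥C F := H.submatrix id Subtype.val with hB
  have hfact : G * Matrix.diagonal (fun i => if i ∈ S then (1 : F) else 0) * Hᵀ
      = -(A * Bᵀ) := by
    ext a b
    have h0 : ∑ j, G a j * H b j = 0 := by
      have := congrFun (congrFun hGH a) b
      simpa [Matrix.mul_apply] using this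
    have hsplit := Finset.sum_add_sum_compl S (fun j => G a j * H b j)
    rw [h0] at hsplit
    have hLHS : (G * Matrix.diagonal (fun i => if i ∈ S then (1 : F) else 0) * Hᵀ) a b
        = ∑ j ∈ S, G a j * H b j := by
      rw [Matrix.mul_apply]
      rw [← Finset.sum_subset (Finset.subset_univ S)]
      · apply Finset.sum_congr rfl
        intro j hj
        simp [Matrix.mul_diagonal, hj]
      · intro j _ hj
        simp [Matrix.mul_diagonal, hj]
    have hRHS : (A * Bᵀ) a b = ∑ j ∈ C, G a j * H b j := by
      rw [Matrix.mul_apply, ← Finset.sum_attach C (fun j => G a j * H b j)]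
      rfl
    rw [hLHS, Matrix.neg_apply, hRHS]
    rw [← hC] at hsplit
    linear_combination hsplit
  rw [hfact]
  have hAinj : Function.Injective A.mulVecLin := by
    rw [Matrix.coe_mulVecLin]
    exact Matrix.mulVec_injective_iff.2 hGcols
  have hBinj : Function.Injective B.mulVecLin := by
    rw [Matrix.coe_mulVecLin]
    exact Matrix.mulVec_injective_iff.2 hHcols
  have hneg : (-(A * Bᵀ)).rank = (A * Bᵀ).rank := by
    have hr : LinearMap.range (-(A * Bᵀ)).mulVecLin
        = LinearMap.range (A * Bᵀ).mulVecLin := by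
      apply le_antisymm
      · rintro v ⟨w, rfl⟩
        exact ⟨-w, by
          simp only [Matrix.mulVecLin_apply, Matrix.mulVec_neg, Matrix.neg_mulVec, neg_neg]⟩
      · rintro v ⟨w, rfl⟩
        exact ⟨-w, by
          simp only [Matrix.mulVecLin_apply, Matrix.mulVec_neg, Matrix.neg_mulVec, neg_neg]⟩
    rw [Matrix.rank, Matrix.rank, hr]
  rw [hneg]
  have h2 : (A * Bᵀ).rank = Bᵀ.rank := by
    rw [Matrix.rank, Matrix.rank, Matrix.mulVecLin_mul, LinearMap.range_comp]
    exact (LinearEquiv.finrank_eq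
      (Submodule.equivMapOfInjective A.mulVecLin hAinj _)).symm
  rw [h2, Matrix.rank_transpose, Matrix.rank,
    LinearMap.finrank_range_of_inj hBinj, Module.finrank_fintype_fun_eq_card,
    Fintype.card_coe, hCcard]
end

section
/- Let F be a field, D a linear subspace of F^n, e ∈ F^n, and t a positive integer with dim(D) < t. If for every subset T of the n coordinates with |T| ≤ t the restriction e|_T lies in the restricted code D|_T (the image of D under coordinate projection onto T), then e ∈ D. (Equivalently: if the (D,e)-retrieval scheme is secure against all colluding sets of size t, i.e., e|_T ∈ D|_T for all T with |T| ≤ t, and the scheme is nontrivial in the sense e ∉ D, then dim(D) ≥ t.) -/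
/-- Greedy separation lemma: any submodule of `Fin n → F` of rank ≤ m admits a set of
at most m coordinates on which projection is injective. -/
lemma aux_sep (F : Type*) [Field F] (n : ℕ) :
    ∀ (m : ℕ) (U : Submodule F (Fin n → F)), Module.finrank F U ≤ m →
      ∃ T : Finset (Fin n), T.card ≤ m ∧ ∀ w ∈ U, (∀ i ∈ T, w i = 0) → w = 0 := by
  intro m
  induction m with
  | zero =>
    intro U hU
    refine ⟨∅, le_refl _, fun w hw _ => ?_⟩
    have : U = ⊥ := Submodule.finrank_eq_zero.mp (Nat.le_zero.mp hU)
    simpa [this] using hw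
  | succ m ih =>
    intro U hU
    by_cases hbot : U = ⊥
    · exact ⟨∅, Nat.zero_le _, fun w hw _ => by simpa [hbot] using hw⟩
    · obtain ⟨u, hu, hune⟩ := (Submodule.ne_bot_iff U).mp hbot
      obtain ⟨i, hi⟩ : ∃ i, u i ≠ 0 := by
        by_contra hall
        push_neg at hall
        exact hune (funext hall)
      set U' : Submodule F (Fin n → F) :=
        U ⊓ LinearMap.ker (LinearMap.proj i : (Fin n → F) →ₗ[F] F) with hU'
      have hlt : U' < U := by
        refine lt_of_le_of_ne inf_le_left ?_
        intro heq
        have : u ∈ U' := heq ▸ hu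
        exact hi (this.2)
      have hrank : Module.finrank F U' < Module.finrank F U :=
        Submodule.finrank_lt_finrank_of_lt hlt
      obtain ⟨T', hT'card, hT'⟩ := ih U' (by omega)
      refine ⟨insert i T', ?_, ?_⟩
      · calc (insert i T').card ≤ T'.card + 1 := Finset.card_insert_le _ _
          _ ≤ m + 1 := by omega
      · intro w hw hzero
        have hwi : w i = 0 := hzero i (Finset.mem_insert_self _ _)
        have hw' : w ∈ U' := ⟨hw, hwi⟩
        exact hT' w hw' (fun j hj => hzero j (Finset.mem_insert_of_mem hj))

/-- If `dim D < t` and the projection of `e` onto every coordinate set `T`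
of size at most `t` lies in the restricted code `D|_T`, then `e ∈ D`. -/
theorem stmt_4 (F : Type*) [Field F] (n : ℕ) (hn : 0 < n)
    (D : Submodule F (Fin n → F)) (e : Fin n → F) (t : ℕ) (ht : 0 < t)
    (hdim : Module.finrank F D < t)
    (h : ∀ T : Finset (Fin n), T.card ≤ t →
      (fun i : T => e i) ∈ D.map (LinearMap.funLeft F F (fun i : T => (i : Fin n)))) :
    e ∈ D := by
  by_cases he : e = 0
  · simpa [he] using D.zero_mem
  set W : Submodule F (Fin n → F) := D ⊔ Submodule.span F {e} with hW
  have hWrank : Module.finrank F W ≤ t := by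
    have h1 : Module.finrank F W + Module.finrank F (D ⊓ Submodule.span F {e} : Submodule F (Fin n → F)) = Module.finrank F D + Module.finrank F (Submodule.span F {e}) :=
      Submodule.finrank_sup_add_finrank_inf_eq D (Submodule.span F {e})
    have h2 : Module.finrank F (Submodule.span F ({e} : Set (Fin n → F))) = 1 :=
      finrank_span_singleton he
    omega
  obtain ⟨T, hTcard, hT⟩ := aux_sep F n t W hWrank
  obtain ⟨d, hd, hde⟩ := h T hTcard
  have hde' : ∀ i ∈ T, d i = e i := by
    intro i hiT
    have := congrFun hde ⟨i, hiT⟩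
    simpa [LinearMap.funLeft] using this
  have hmem : e - d ∈ W := by
    refine Submodule.sub_mem _ ?_ ?_
    · exact Submodule.mem_sup_right (Submodule.mem_span_singleton_self e)
    · exact Submodule.mem_sup_left hd
  have : e - d = 0 := hT _ hmem (fun i hi => by simp [hde' i hi])
  have : e = d := by linear_combination (norm := abel) this
  rwa [this]
end

section
/- Let F be a field, 1 ≤ k ≤ n−1, let G be a generator matrix of an [n,k] MDS code over F and H a corresponding parity-check matrix, and let 𝒯 be a family of subsets of the n coordinates. Then there exists a vector e ∈ F^n that is constant on every T ∈ 𝒯 (i.e., e(i) = e(j) for all i, j ∈ T) and satisfies G · diag(e) · Hᵀ ≠ 0, if and only if 𝒯 is disconnected, i.e., there exist nonempty disjoint sets T₁, T₂ covering all n coordinates such that every T ∈ 𝒯 is contained in T₁ or contained in T₂. (A vector e constant on every T ∈ 𝒯 makes the (rep, e)-retrieval scheme 𝒯-secure, and G · diag(e) · Hᵀ ≠ 0 means the scheme has positive retrieval rate.) -/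
/-!
If `e` is constant on every member of `𝒯` and `G · diag(e) · Hᵀ ≠ 0`, then `e` is not constant
(because `G · Hᵀ = 0`), and a level set of `e` splits `𝒯`.

Conversely, given a split `T, Tᶜ`, take `e = 1_T`. The code `{x G}` is `ker H` by counting
dimensions, so `G · diag(1_T) · Hᵀ = 0` would make `x G · 1_T = y G` a codeword for every `x`.
Then `x = (x - y) + y`, where the codeword of `x - y` vanishes on `T` and that of `y` on `Tᶜ`.
By the MDS property the messages whose codeword vanishes on a set of `u` coordinates form a
space of dimension at most `k - u`, and `(k - |T|) + (k - |Tᶜ|) < k` because `|T|, |Tᶜ| ≥ 1`,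
`|T| + |Tᶜ| = n > k` and `k ≥ 1`.
-/

open Matrix Module

section Disconnected

variable {ι : Type*} [Fintype ι] [DecidableEq ι]

def IsDisconnectedFamily (𝒯 : Set (Finset ι)) : Prop :=
  ∃ T₁ T₂ : Finset ι, T₁.Nonempty ∧ T₂.Nonempty ∧ Disjoint T₁ T₂ ∧
    T₁ ∪ T₂ = Finset.univ ∧ ∀ T ∈ 𝒯, T ⊆ T₁ ∨ T ⊆ T₂

theorem isDisconnectedFamily_iff_exists_compl {𝒯 : Set (Finset ι)} :
    IsDisconnectedFamily 𝒯 ↔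
      ∃ T : Finset ι, T.Nonempty ∧ Tᶜ.Nonempty ∧ ∀ S ∈ 𝒯, S ⊆ T ∨ S ⊆ Tᶜ := by
  constructor
  · rintro ⟨T₁, T₂, h₁, h₂, hdisj, hunion, hsplit⟩
    obtain rfl : T₂ = T₁ᶜ :=
      (eq_compl_iff_isCompl.2 ⟨hdisj.symm, codisjoint_iff.2 (by rw [sup_comm]; exact hunion)⟩)
    exact ⟨T₁, h₁, h₂, hsplit⟩
  · rintro ⟨T, h₁, h₂, hsplit⟩
    exact ⟨T, Tᶜ, h₁, h₂, disjoint_compl_right, Finset.union_compl T, hsplit⟩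

theorem exists_splitting_finset_of_ne {α : Type*} {𝒯 : Set (Finset ι)} (e : ι → α)
    (he : ∀ S ∈ 𝒯, ∀ i ∈ S, ∀ j ∈ S, e i = e j) {i₀ j₀ : ι} (hne : e i₀ ≠ e j₀) :
    ∃ T : Finset ι, T.Nonempty ∧ Tᶜ.Nonempty ∧ ∀ S ∈ 𝒯, S ⊆ T ∨ S ⊆ Tᶜ := by
  classical
  refine ⟨({i | e i = e i₀} : Finset ι), ⟨i₀, by simp⟩, ⟨j₀, by simpa using hne.symm⟩,
    fun S hS => ?_⟩
  by_cases h : ∀ t ∈ S, e t = e i₀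
  · exact Or.inl fun t ht => by simpa using h t ht
  · push Not at h
    obtain ⟨t, ht, hti⟩ := h
    exact Or.inr fun i hi => by simpa [he S hS i hi t ht] using hti

end Disconnected

theorem Matrix.mul_diagonal_mul_eq_zero_of_forall_eq {R l ι o : Type*} [CommSemiring R]
    [Fintype ι] [DecidableEq ι] {A : Matrix l ι R} {B : Matrix ι o R} (hAB : A * B = 0)
    {e : ι → R} (he : ∀ i j, e i = e j) : A * diagonal e * B = 0 := by
  cases isEmpty_or_nonempty ι with
  | inl _ => ext; simp [mul_apply]
  | inr h =>
    obtain ⟨i⟩ := h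
    have : diagonal e = e i • (1 : Matrix ι ι R) := by
      ext a b; by_cases hab : a = b <;> simp [hab, he b i]
    rw [this, Matrix.mul_smul, Matrix.mul_one, Matrix.smul_mul, hAB, smul_zero]

section MDS

variable {F ι : Type*} [Field F] {k : ℕ}

def IsMDSGenerator (G : Matrix (Fin k) ι F) : Prop :=
  ∀ s : Finset ι, s.card = k → LinearIndependent F (fun j : s => Gᵀ j.val)

def vanishingOn (G : Matrix (Fin k) ι F) (U : Finset ι) : Submodule F (Fin k → F) :=
  LinearMap.ker (LinearMap.funLeft F F ((↑) : U → ι) ∘ₗ G.vecMulLinear)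

theorem mem_vanishingOn {G : Matrix (Fin k) ι F} {U : Finset ι} {x : Fin k → F} :
    x ∈ vanishingOn G U ↔ ∀ j ∈ U, (x ᵥ* G) j = 0 := by
  simp [vanishingOn, funext_iff, LinearMap.funLeft]

theorem vanishingOn_inf_le [DecidableEq ι] (G : Matrix (Fin k) ι F) (U V : Finset ι) :
    vanishingOn G U ⊓ vanishingOn G V ≤ vanishingOn G (U ∪ V) := by
  intro x hx
  simp only [Submodule.mem_inf, mem_vanishingOn] at hx ⊢
  intro j hj
  rcases Finset.mem_union.1 hj with hj | hj
  exacts [hx.1 j hj, hx.2 j hj]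

namespace IsMDSGenerator

variable {G : Matrix (Fin k) ι F}

theorem vanishingOn_eq_bot (hG : IsMDSGenerator G) {S : Finset ι} (hS : k ≤ S.card) :
    vanishingOn G S = ⊥ := by
  obtain ⟨S', hS'S, hS'⟩ := Finset.exists_subset_card_eq hS
  refine eq_bot_iff.2 fun x hx => ?_
  have hspan := (hG S' hS').span_eq_top_of_card_eq_finrank' (by simp [hS'])
  have hx' : dotProductBilin F F x = 0 :=
    LinearMap.ext_on_range hspan fun j => mem_vanishingOn.1 hx j (hS'S j.2)
  rw [Submodule.mem_bot]
  funext a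
  simpa using LinearMap.congr_fun hx' (Pi.single a 1)

theorem finrank_vanishingOn_le [Fintype ι] [DecidableEq ι] (hG : IsMDSGenerator G)
    (hk : k ≤ Fintype.card ι) (U : Finset ι) :
    finrank F (vanishingOn G U) ≤ k - U.card := by
  obtain ⟨B, hBU, hB⟩ := Finset.exists_subset_card_eq (s := Uᶜ) (n := k - U.card)
    (by rw [Finset.card_compl]; omega)
  have hUB : Disjoint (vanishingOn G U) (vanishingOn G B) := by
    rw [disjoint_iff, ← le_bot_iff, ← hG.vanishingOn_eq_bot (S := U ∪ B)]
    · exact vanishingOn_inf_le G U B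
    · rw [Finset.card_union_of_disjoint (disjoint_compl_right.mono_right hBU)]
      omega
  have hinj : Function.Injective
      ((LinearMap.funLeft F F ((↑) : B → ι) ∘ₗ G.vecMulLinear) ∘ₗ (vanishingOn G U).subtype) := by
    rw [← LinearMap.ker_eq_bot, LinearMap.ker_comp, ← Submodule.disjoint_iff_comap_eq_bot]
    exact hUB
  simpa [hB] using LinearMap.finrank_le_finrank_of_injective hinj

theorem range_vecMulLinear_eq_ker [Fintype ι] {m : Type*} [Fintype m] (hG : IsMDSGenerator G)
    (hk : k ≤ Fintype.card ι) {H : Matrix m ι F} (hH : H.rank = Fintype.card ι - k)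
    (hGH : G * Hᵀ = 0) : LinearMap.range G.vecMulLinear = LinearMap.ker H.mulVecLin := by
  have hinj : LinearMap.ker G.vecMulLinear = ⊥ := by
    refine eq_bot_iff.2 fun x hx => ?_
    rw [← hG.vanishingOn_eq_bot (S := Finset.univ) (by simpa using hk)]
    exact mem_vanishingOn.2 fun j _ => congr_fun (LinearMap.mem_ker.1 hx) j
  apply Submodule.eq_of_le_of_finrank_le
  · rintro _ ⟨x, rfl⟩
    simp [← vecMul_transpose, vecMul_vecMul, hGH]
  · have := LinearMap.finrank_range_add_finrank_ker H.mulVecLin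
    rw [LinearMap.finrank_range_of_inj (LinearMap.ker_eq_bot.1 hinj)]
    simp only [finrank_fintype_fun_eq_card, Fintype.card_fin] at this ⊢
    rw [← Matrix.rank] at this
    omega

theorem mul_diagonal_indicator_mul_ne_zero [Fintype ι] [DecidableEq ι] {m : Type*} [Fintype m]
    (hG : IsMDSGenerator G) (hk₀ : 1 ≤ k) (hk : k < Fintype.card ι) {H : Matrix m ι F}
    (hH : H.rank = Fintype.card ι - k) (hGH : G * Hᵀ = 0) {T : Finset ι} (hT : T.Nonempty)
    (hTc : Tᶜ.Nonempty) : G * diagonal (fun j => if j ∈ T then (1 : F) else 0) * Hᵀ ≠ 0 := by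
  set e : ι → F := fun j => if j ∈ T then 1 else 0
  intro h
  have hcode := hG.range_vecMulLinear_eq_ker hk.le hH hGH
  have hsup : vanishingOn G T ⊔ vanishingOn G Tᶜ = ⊤ := by
    refine eq_top_iff.2 fun x _ => ?_
    obtain ⟨y, hy⟩ : x ᵥ* (G * diagonal e) ∈ LinearMap.range G.vecMulLinear := by
      rw [hcode, LinearMap.mem_ker, mulVecLin_apply, ← vecMul_transpose, vecMul_vecMul, h,
        vecMul_zero]
    rw [← vecMul_vecMul] at hy
    have hy' (j : ι) : (y ᵥ* G) j = (x ᵥ* G) j * e j := by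
      simpa [vecMul_diagonal] using congr_fun hy j
    refine Submodule.mem_sup.2 ⟨x - y, ?_, y, ?_, sub_add_cancel x y⟩
    · exact mem_vanishingOn.2 fun j hj => by simp [sub_vecMul, hy', e, hj]
    · exact mem_vanishingOn.2 fun j hj => by simp [hy', e, Finset.mem_compl.1 hj]
  have hdim := Submodule.finrank_add_le_finrank_add_finrank (vanishingOn G T) (vanishingOn G Tᶜ)
  rw [hsup, finrank_top, finrank_fin_fun] at hdim
  have hT₁ := hG.finrank_vanishingOn_le hk.le T
  have hT₂ := hG.finrank_vanishingOn_le hk.le Tᶜ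
  have hcard := Finset.card_compl T
  have := hT.card_pos
  have := hTc.card_pos
  omega

end IsMDSGenerator

end MDS

/-- For an `[n,k]` MDS code with generator matrix `G` and parity-check
matrix `H`, there exists a vector `e` constant on every colluding set `T ∈ 𝒯` with
`G · diag(e) · Hᵀ ≠ 0` if and only if the collusion pattern `𝒯` is disconnected
(there exist nonempty disjoint sets `T₁, T₂` covering all coordinates such that every
`T ∈ 𝒯` is contained in `T₁` or in `T₂`). -/
theorem stmt_5 (F : Type*) [Field F] (n k : ℕ) (hk1 : 1 ≤ k) (hk2 : k ≤ n - 1)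
    (G : Matrix (Fin k) (Fin n) F) (H : Matrix (Fin (n - k)) (Fin n) F)
    (hMDS : ∀ s : Finset (Fin n), s.card = k →
      LinearIndependent F (fun j : s => G.transpose j.val))
    (hH : H.rank = n - k) (hGH : G * H.transpose = 0)
    (𝒯 : Set (Finset (Fin n))) :
    (∃ e : Fin n → F, (∀ T ∈ 𝒯, ∀ i ∈ T, ∀ j ∈ T, e i = e j) ∧
        G * Matrix.diagonal e * H.transpose ≠ 0) ↔
      (∃ T₁ T₂ : Finset (Fin n), T₁.Nonempty ∧ T₂.Nonempty ∧ Disjoint T₁ T₂ ∧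
        T₁ ∪ T₂ = Finset.univ ∧ ∀ T ∈ 𝒯, T ⊆ T₁ ∨ T ⊆ T₂) := by
  change _ ↔ IsDisconnectedFamily 𝒯
  rw [isDisconnectedFamily_iff_exists_compl]
  constructor
  · rintro ⟨e, he, hne⟩
    obtain ⟨i, j, hij⟩ : ∃ i j, e i ≠ e j := by
      by_contra! hconst
      exact hne (mul_diagonal_mul_eq_zero_of_forall_eq hGH hconst)
    exact exists_splitting_finset_of_ne e he hij
  · rintro ⟨T, hT, hTc, hsplit⟩
    refine ⟨fun j => if j ∈ T then 1 else 0, fun S hS i hi j hj => ?_,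
      IsMDSGenerator.mul_diagonal_indicator_mul_ne_zero hMDS hk1
        (by rw [Fintype.card_fin]; omega) (by rwa [Fintype.card_fin]) hGH hT hTc⟩
    rcases hsplit S hS with h | h
    · simp [h hi, h hj]
    · simp [Finset.mem_compl.1 (h hi), Finset.mem_compl.1 (h hj)]
end

section
/- Let F be a field, 1 ≤ k ≤ n−1, let G be a generator matrix of an [n,k] MDS code over F and H a corresponding parity-check matrix. If S is a nonempty proper subset of the n coordinates, then G · diag(1_S) · Hᵀ ≠ 0; that is, the (rep, 1_S)-retrieval scheme downloads nontrivial information. -/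
/-!
If `G · diag(1_S) · Hᵀ = 0`, then both `G · diag(1_S)` and `G · diag(1_{Sᶜ}) = G - G · diag(1_S)`
have their rows in the code `ker Hᵀ`, which has dimension `n - rank H = k`. Their row spaces are
supported on the disjoint sets `S` and `Sᶜ`, so their ranks add up to at most `k`. By the MDS
property these ranks are at least `min k |S|` and `min k (n - |S|)`, and for `1 ≤ k < n` and
`0 < |S| < n` the two minima sum to more than `k`.
-/

open Matrix Module

section

variable {F : Type*} [Field F]

namespace Matrix

lemma rank_add_rank_add_rank_le_card_of_mul_transpose_eq_zero {l m n p : Type*}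
    [Fintype l] [Fintype m] [Fintype n] [Fintype p]
    {H : Matrix l m F} {A : Matrix n m F} {B : Matrix p m F} (hA : A * Hᵀ = 0) (hB : B * Hᵀ = 0)
    (hAB : Disjoint (LinearMap.range A.vecMulLinear) (LinearMap.range B.vecMulLinear)) :
    A.rank + B.rank + H.rank ≤ Fintype.card m := by
  have hsup : LinearMap.range A.vecMulLinear ⊔ LinearMap.range B.vecMulLinear ≤
      LinearMap.ker H.mulVecLin := by
    refine sup_le ?_ ?_ <;> rintro _ ⟨x, rfl⟩ <;>
      simp only [LinearMap.mem_ker, mulVecLin_apply, vecMulLinear_apply, ← vecMul_transpose,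
        vecMul_vecMul, hA, hB, vecMul_zero]
  have hsum := Submodule.finrank_sup_add_finrank_inf_eq (LinearMap.range A.vecMulLinear)
    (LinearMap.range B.vecMulLinear)
  rw [hAB.eq_bot, finrank_bot, add_zero] at hsum
  have hker := LinearMap.finrank_range_add_finrank_ker H.mulVecLin
  rw [finrank_fintype_fun_eq_card] at hker
  have := Submodule.finrank_mono hsup
  rw [rank_eq_finrank_span_row A, rank_eq_finrank_span_row B, ← range_vecMulLinear,
    ← range_vecMulLinear, rank]
  omega

lemma disjoint_range_vecMulLinear_mul_diagonal {m n p : Type*} [Fintype m] [Fintype n]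
    [DecidableEq n] [Fintype p] {d e : n → F} (hde : d * e = 0) (M : Matrix m n F)
    (N : Matrix p n F) :
    Disjoint (LinearMap.range (M * diagonal d).vecMulLinear)
      (LinearMap.range (N * diagonal e).vecMulLinear) := by
  rw [Submodule.disjoint_def]
  rintro _ ⟨x, rfl⟩ ⟨y, hy⟩
  funext i
  have hi := congrFun hy i
  simp only [vecMulLinear_apply, ← vecMul_vecMul, vecMul_diagonal] at hi ⊢
  rcases mul_eq_zero.1 (congrFun hde i) with h | h
  · simp [h]
  · simp [← hi, h]

lemma card_le_rank_of_linearIndependent_cols {m n : Type*} [Fintype m] [Fintype n]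
    {A : Matrix m n F} {s : Finset n} (hs : LinearIndependent F (fun j : s => Aᵀ j.val)) :
    s.card ≤ A.rank := by
  have : (A.submatrix id ((↑) : s → n))ᵀ.rank = s.card := by
    rw [LinearIndependent.rank_matrix (M := (A.submatrix id ((↑) : s → n))ᵀ) hs,
      Fintype.card_coe]
  rw [← this, rank_transpose]
  exact rank_submatrix_le A id _

lemma min_card_le_rank_mul_diagonal_indicator {m n : Type*} [Fintype m] [Fintype n]
    [DecidableEq n] {k : ℕ} {G : Matrix m n F}
    (hG : ∀ s : Finset n, s.card = k → LinearIndependent F (fun j : s => Gᵀ j.val))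
    (hk : k ≤ Fintype.card n) (W : Finset n) :
    min k W.card ≤ (G * diagonal (fun i => if i ∈ W then (1 : F) else 0)).rank := by
  obtain ⟨U, hUW, hU⟩ := Finset.exists_subset_card_eq (min_le_right k W.card)
  obtain ⟨T, hUT, hT⟩ := Finset.exists_superset_card_eq (hU.trans_le (min_le_left _ _)) hk
  rw [← hU]
  apply card_le_rank_of_linearIndependent_cols
  convert (hG T hT).comp (fun j : U => ⟨j, hUT j.2⟩) fun _ _ h => Subtype.ext (Subtype.mk.inj h)
    using 1
  funext j i
  simp [hUW j.2]

lemma diagonal_indicator_compl {n : Type*} [Fintype n] [DecidableEq n] (S : Finset n) :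
    diagonal (fun i => if i ∈ Sᶜ then (1 : F) else 0) =
      1 - diagonal (fun i => if i ∈ S then (1 : F) else 0) := by
  rw [← diagonal_one, diagonal_sub]
  congr 1
  funext i
  by_cases hi : i ∈ S <;> simp [hi]

end Matrix

lemma Finset.indicator_mul_indicator_compl {n : Type*} [Fintype n] [DecidableEq n]
    (S : Finset n) :
    ((fun i => if i ∈ S then (1 : F) else 0) * fun i => if i ∈ Sᶜ then (1 : F) else 0) = 0 := by
  funext i
  by_cases hi : i ∈ S <;> simp [hi]

end

/-- For an `[n,k]` MDS code with generator matrix `G` and parity-check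
matrix `H`, if `S` is a nonempty proper subset of the coordinates then
`G · diag(1_S) · Hᵀ ≠ 0`. -/
theorem stmt_7 (F : Type*) [Field F] (n k : ℕ) (hk1 : 1 ≤ k) (hk2 : k ≤ n - 1)
    (G : Matrix (Fin k) (Fin n) F) (H : Matrix (Fin (n - k)) (Fin n) F)
    (hMDS : ∀ s : Finset (Fin n), s.card = k →
      LinearIndependent F (fun j : s => G.transpose j.val))
    (hH : H.rank = n - k) (hGH : G * H.transpose = 0)
    (S : Finset (Fin n)) (hS : S.Nonempty) (hSne : S ≠ Finset.univ) :
    G * Matrix.diagonal (fun i => if i ∈ S then (1 : F) else 0) * H.transpose ≠ 0 := by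
  intro hS0
  have hSc0 : G * diagonal (fun i => if i ∈ Sᶜ then (1 : F) else 0) * Hᵀ = 0 := by
    rw [diagonal_indicator_compl, Matrix.mul_sub, Matrix.mul_one, Matrix.sub_mul, hGH, hS0,
      sub_zero]
  have hrank := rank_add_rank_add_rank_le_card_of_mul_transpose_eq_zero hS0 hSc0
    (disjoint_range_vecMulLinear_mul_diagonal (S.indicator_mul_indicator_compl) G G)
  have hkn : k ≤ Fintype.card (Fin n) := by rw [Fintype.card_fin]; omega
  have hrS := min_card_le_rank_mul_diagonal_indicator hMDS hkn S
  have hrSc := min_card_le_rank_mul_diagonal_indicator hMDS hkn Sᶜ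
  have hS1 := hS.card_pos
  have hS2 := (Finset.card_lt_iff_ne_univ S).2 hSne
  simp only [Finset.card_compl, Fintype.card_fin, hH] at hrank hrSc hS2
  omega
end

section
/- Let C be a k-dimensional linear code of length n over a field F whose minimum Hamming distance is n−k+1 (an [n,k] MDS code) with 1 ≤ k ≤ n−1, and let S be a nonempty proper subset of the n coordinates. Then C ⋆ 1_S is not contained in C; that is, there exists a codeword c ∈ C such that the vector obtained from c by setting to zero all coordinates outside S is not a codeword of C. -/
/-!
Suppose `C ⋆ 1_S ⊆ C`, and pick `a ∈ S`, `b ∉ S`. Since `dim C = k`, some nonzero `c ∈ C`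
vanishes on a set `Z` of `k - 1` coordinates avoiding `a` and `b`. Then `c ⋆ 1_S ∈ C` vanishes
on the `k` coordinates `Z ∪ {b}`, so it has weight at most `n - k` and must be `0`; hence
`c a = 0`, and `c` itself vanishes on the `k` coordinates `Z ∪ {a}`, forcing `c = 0`.
-/

section

variable {ι : Type*} [Fintype ι]

lemma ncard_support_le_card_compl [DecidableEq ι] {M : Type*} [Zero M] {v : ι → M}
    {W : Finset ι} (hv : ∀ i ∈ W, v i = 0) : (Function.support v).ncard ≤ Wᶜ.card := by
  rw [← Set.ncard_coe_finset]
  refine Set.ncard_le_ncard (fun i hi => ?_) (Set.toFinite _)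
  simp only [Finset.coe_compl, Set.mem_compl_iff, Finset.mem_coe]
  exact fun hiW => hi (hv i hiW)

lemma eq_zero_of_forall_mem_eq_zero_of_card_lt [DecidableEq ι] {M : Type*} [Zero M] {v : ι → M}
    {d : ℕ} (hweight : v ≠ 0 → d ≤ (Function.support v).ncard) {W : Finset ι}
    (hW : Fintype.card ι < W.card + d) (hv : ∀ i ∈ W, v i = 0) : v = 0 := by
  by_contra hv0
  have := (hweight hv0).trans (ncard_support_le_card_compl hv)
  rw [Finset.card_compl] at this
  have := W.card_le_univ
  omega

lemma Submodule.exists_ne_zero_forall_eq_zero_of_card_lt_finrank {F : Type*} [DivisionRing F]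
    (C : Submodule F (ι → F)) {Z : Finset ι} (hZ : Z.card < Module.finrank F C) :
    ∃ c ∈ C, c ≠ 0 ∧ ∀ i ∈ Z, c i = 0 := by
  let restrict : C →ₗ[F] (Z → F) := (LinearMap.funLeft F F ((↑) : Z → ι)).comp C.subtype
  have hker : LinearMap.ker restrict ≠ ⊥ :=
    LinearMap.ker_ne_bot_of_finrank_lt (by rwa [Module.finrank_fintype_fun_eq_card,
      Fintype.card_coe])
  obtain ⟨c, hc, hc0⟩ := Submodule.exists_mem_ne_zero_of_ne_bot hker
  refine ⟨c, c.2, fun h => hc0 (Subtype.ext h), fun i hi => ?_⟩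
  exact congrFun hc ⟨i, hi⟩

end

/-- If `C` is a `k`-dimensional MDS code of length `n` (every nonzero
codeword has Hamming weight at least `n − k + 1`) with `1 ≤ k ≤ n − 1`, and `S` is a
nonempty proper subset of the coordinates, then `C ⋆ 1_S ⊄ C`: some codeword `c ∈ C`,
with all coordinates outside `S` set to zero, is no longer a codeword of `C`. -/
theorem stmt_8 (F : Type*) [Field F] (n k : ℕ) (hk1 : 1 ≤ k) (hk2 : k ≤ n - 1)
    (C : Submodule F (Fin n → F)) (hdim : Module.finrank F C = k)
    (hMDS : ∀ c ∈ C, c ≠ 0 → n - k + 1 ≤ (Function.support c).ncard)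
    (S : Finset (Fin n)) (hS : S.Nonempty) (hSne : S ≠ Finset.univ) :
    ∃ c ∈ C, (fun i => if i ∈ S then c i else 0) ∉ C := by
  by_contra! hclosed
  have eq_zero_of_vanishes (v : Fin n → F) (hv : v ∈ C) (W : Finset (Fin n)) (hW : k ≤ W.card)
      (hvW : ∀ i ∈ W, v i = 0) : v = 0 :=
    eq_zero_of_forall_mem_eq_zero_of_card_lt (hMDS v hv) (by rw [Fintype.card_fin]; omega) hvW
  obtain ⟨a, haS⟩ := hS
  obtain ⟨b, hbS⟩ : ∃ b, b ∉ S := by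
    by_contra! hall
    exact hSne (Finset.eq_univ_iff_forall.mpr hall)
  have hab : a ≠ b := fun h => hbS (h ▸ haS)
  obtain ⟨Z, hZab, hZ⟩ := Finset.exists_subset_card_eq (s := {a, b}ᶜ) (n := k - 1)
    (by rw [Finset.card_compl, Fintype.card_fin, Finset.card_pair hab]; omega)
  have haZ : a ∉ Z := fun h => by simpa using hZab h
  have hbZ : b ∉ Z := fun h => by simpa using hZab h
  obtain ⟨c, hcC, hc0, hcZ⟩ :=
    C.exists_ne_zero_forall_eq_zero_of_card_lt_finrank (Z := Z) (by omega)
  have hcut : (fun i => if i ∈ S then c i else 0) = 0 :=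
    eq_zero_of_vanishes _ (hclosed c hcC) (insert b Z)
      (by rw [Finset.card_insert_of_notMem hbZ]; omega) (by simp +contextual [hbS, hcZ])
  have hca : c a = 0 := by simpa [haS] using congrFun hcut a
  exact hc0 <| eq_zero_of_vanishes c hcC (insert a Z)
    (by rw [Finset.card_insert_of_notMem haZ]; omega) (by simp +contextual [hca, hcZ])
end

section
/- Let F be a field, let n, k satisfy 1 ≤ k ≤ n−1 and n − k ≤ k, let G be a generator matrix of an [n,k] MDS code over F and H a corresponding parity-check matrix. Let T₁ and T₂ be disjoint subsets of the n coordinates with |T₁| ≤ k and |T₂| ≤ k. Then there exists a subset S of the coordinates such that (T₁ ⊆ S or T₁ ∩ S = ∅), (T₂ ⊆ S or T₂ ∩ S = ∅), and the rank of G · diag(1_S) · Hᵀ equals n − k. (Thus the (rep, 1_S)-retrieval scheme is ⟨T₁,T₂⟩-secure and has retrieval rate (n−k)/n.) -/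
/-!
Take `S` with `T₂ ⊆ S`, `S ∩ T₁ = ∅` and `n - k ≤ |S| ≤ k`, which the size bounds allow.
If `G · diag(1_S) · Hᵀ x = 0`, put `y = Hᵀ x`; then `G y = 0` and `G (1_S ⊙ y) = 0`.
A kernel vector of an MDS generator matrix supported on at most `k` coordinates vanishes, so
first `1_S ⊙ y = 0` and then, `y` being supported on `Sᶜ` with `|Sᶜ| ≤ k`, `y = 0`.
As `Hᵀ` has full column rank, `x = 0`; hence the product has full column rank `n - k`.
-/

open Matrix

theorem Finset.exists_superset_disjoint_card_le_card_compl_le {α : Type*} [Fintype α]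
    [DecidableEq α] {k : ℕ} {T₁ T₂ : Finset α} (hdisj : Disjoint T₁ T₂) (h₁ : T₁.card ≤ k)
    (h₂ : T₂.card ≤ k) (hk : Fintype.card α - k ≤ k) :
    ∃ S : Finset α, T₂ ⊆ S ∧ Disjoint T₁ S ∧ S.card ≤ k ∧ Sᶜ.card ≤ k := by
  have hT₂ : T₂ ⊆ T₁ᶜ := Finset.subset_compl_iff_disjoint_left.2 hdisj
  have hcard := Finset.card_le_card hT₂
  rw [Finset.card_compl] at hcard
  obtain ⟨S, hT₂S, hST₁, hS⟩ := Finset.exists_subsuperset_card_eq hT₂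
    (le_max_right (Fintype.card α - k) T₂.card)
    (by rw [Finset.card_compl]; exact max_le (by omega) hcard)
  refine ⟨S, hT₂S, Finset.subset_compl_iff_disjoint_left.1 hST₁, ?_, ?_⟩
  · rw [hS]; exact max_le hk h₂
  · rw [Finset.card_compl]; omega

theorem Matrix.rank_eq_card_width_iff {F m n : Type*} [Field F] [Fintype n]
    (A : Matrix m n F) : A.rank = Fintype.card n ↔ ∀ v, A *ᵥ v = 0 → v = 0 := by
  rw [← ker_mulVecLin_eq_bot_iff, ← Submodule.finrank_eq_zero, Matrix.rank]
  have := LinearMap.finrank_range_add_finrank_ker A.mulVecLin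
  rw [Module.finrank_fintype_fun_eq_card] at this
  omega

section MDS

variable {F ι m : Type*} [Field F] [Fintype ι] {k : ℕ} {G : Matrix m ι F}

theorem Matrix.eq_zero_of_mulVec_eq_zero_of_support_subset
    (hMDS : ∀ s : Finset ι, s.card = k → LinearIndependent F (fun j : s => Gᵀ j))
    (hk : k ≤ Fintype.card ι) {s : Finset ι} (hs : s.card ≤ k) {z : ι → F}
    (hz : ∀ j ∉ s, z j = 0) (hGz : G *ᵥ z = 0) : z = 0 := by
  classical
  obtain ⟨t, hst, -, ht⟩ := Finset.exists_subsuperset_card_eq (Finset.subset_univ s) hs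
    (by simpa using hk)
  have hzt : ∀ j ∉ t, z j = 0 := fun j hj => hz j fun hjs => hj (hst hjs)
  have hsum : ∑ j ∈ t, z j • Gᵀ j = 0 := by
    rw [Finset.sum_subset (Finset.subset_univ t) fun j _ hj => by rw [hzt j hj, zero_smul],
      ← hGz, mulVec_eq_sum]
    simp only [op_smul_eq_smul]
  have hzt_mem := linearIndepOn_iff''.1 (hMDS t ht) t z subset_rfl hzt hsum
  funext j
  by_cases hj : j ∈ t
  · exact hzt_mem j hj
  · exact hzt j hj

theorem Matrix.eq_zero_of_mulVec_eq_zero_of_mulVec_diagonal_eq_zero [DecidableEq ι]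
    (hMDS : ∀ s : Finset ι, s.card = k → LinearIndependent F (fun j : s => Gᵀ j))
    (hk : k ≤ Fintype.card ι) {S : Finset ι} (hS : S.card ≤ k) (hSc : Sᶜ.card ≤ k)
    {y : ι → F} (hGy : G *ᵥ y = 0)
    (hGSy : G *ᵥ (diagonal (fun i => if i ∈ S then 1 else 0) *ᵥ y) = 0) : y = 0 := by
  have hyS : diagonal (fun i => if i ∈ S then 1 else 0) *ᵥ y = 0 :=
    eq_zero_of_mulVec_eq_zero_of_support_subset hMDS hk hS
      (fun j hj => by simp [mulVec_diagonal, hj]) hGSy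
  refine eq_zero_of_mulVec_eq_zero_of_support_subset hMDS hk hSc (fun j hj => ?_) hGy
  simpa [mulVec_diagonal, Finset.notMem_compl.1 hj] using congrFun hyS j

end MDS

theorem stmt_9_general (F : Type*) [Field F] (n k : ℕ) (hk2 : k ≤ n - 1)
    (hnk : n - k ≤ k)
    (G : Matrix (Fin k) (Fin n) F) (H : Matrix (Fin (n - k)) (Fin n) F)
    (hMDS : ∀ s : Finset (Fin n), s.card = k →
      LinearIndependent F (fun j : s => G.transpose j.val))
    (hH : H.rank = n - k) (hGH : G * H.transpose = 0)
    (T₁ T₂ : Finset (Fin n)) (hdisj : Disjoint T₁ T₂)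
    (h1 : T₁.card ≤ k) (h2 : T₂.card ≤ k) :
    ∃ S : Finset (Fin n), (T₁ ⊆ S ∨ T₁ ∩ S = ∅) ∧ (T₂ ⊆ S ∨ T₂ ∩ S = ∅) ∧
      (G * Matrix.diagonal (fun i => if i ∈ S then (1 : F) else 0) * H.transpose).rank
        = n - k := by
  obtain ⟨S, hT₂S, hT₁S, hS, hSc⟩ := Finset.exists_superset_disjoint_card_le_card_compl_le
    hdisj h1 h2 (by simpa using hnk)
  refine ⟨S, Or.inr (Finset.disjoint_iff_inter_eq_empty.1 hT₁S), Or.inl hT₂S, ?_⟩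
  have hk : k ≤ Fintype.card (Fin n) := by rw [Fintype.card_fin]; omega
  have hHt : ∀ v, Hᵀ *ᵥ v = 0 → v = 0 :=
    (rank_eq_card_width_iff Hᵀ).1 (by simp [rank_transpose, hH])
  refine ((rank_eq_card_width_iff _).2 fun x hx => hHt x ?_).trans (Fintype.card_fin _)
  refine eq_zero_of_mulVec_eq_zero_of_mulVec_diagonal_eq_zero hMDS hk hS hSc ?_ ?_
  · rw [mulVec_mulVec, hGH, zero_mulVec]
  · rwa [mulVec_mulVec, mulVec_mulVec]

/-- For an `[n,k]` MDS code with `n − k ≤ k`, generator matrix `G` and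
parity-check matrix `H`, and disjoint colluding sets `T₁, T₂` of size at most `k`,
there is a set `S` of coordinates whose indicator vector is constant on `T₁` and on `T₂`
(so the `(rep, 1_S)`-scheme is `⟨T₁,T₂⟩`-secure) with `rank (G · diag(1_S) · Hᵀ) = n − k`. -/
theorem stmt_9 (F : Type*) [Field F] (n k : ℕ) (hk1 : 1 ≤ k) (hk2 : k ≤ n - 1)
    (hnk : n - k ≤ k)
    (G : Matrix (Fin k) (Fin n) F) (H : Matrix (Fin (n - k)) (Fin n) F)
    (hMDS : ∀ s : Finset (Fin n), s.card = k →
      LinearIndependent F (fun j : s => G.transpose j.val))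
    (hH : H.rank = n - k) (hGH : G * H.transpose = 0)
    (T₁ T₂ : Finset (Fin n)) (hdisj : Disjoint T₁ T₂)
    (h1 : T₁.card ≤ k) (h2 : T₂.card ≤ k) :
    ∃ S : Finset (Fin n), (T₁ ⊆ S ∨ T₁ ∩ S = ∅) ∧ (T₂ ⊆ S ∨ T₂ ∩ S = ∅) ∧
      (G * Matrix.diagonal (fun i => if i ∈ S then (1 : F) else 0) * H.transpose).rank
        = n - k :=
  stmt_9_general F n k hk2 hnk G H hMDS hH hGH T₁ T₂ hdisj h1 h2
end
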